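/- arXiv:chao-dyn/9803005 — 3 statements merged into one kernel-verified Lean document; each statement's English description precedes it below -/
import Mathlib

section
/- For every real h with 0 < h < 2 and every dimension d ≥ 1, the sum over nonzero integer vectors satisfies Σ_{ν ∈ ℤ^d \ {0}} e^{-|ν| h/2} < (8/h)^d, where |ν| = Σ_{i=1}^d |ν_i|. -/
/-!
With `r = e^{-h/2}`, the summand is `∏ i, r ^ |ν i|`, so the sum over all of `ℤ^d` factorises
into the `d`-th power of the one-dimensional sum `∑_{n ∈ ℤ} r^|n| = (1 + r) / (1 - r)`.
Since `e^{-t} (1 + t) ≤ 1`, this is at most `4 / t = 8 / h` for `t = h / 2 ≤ 2`;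
removing the term `ν = 0`, which equals `1`, makes the inequality strict.
-/

/-- `|ν| = Σ_i |ν_i|`, the ℓ¹ norm of an integer vector. -/
noncomputable def l1 {d : ℕ} (ν : Fin d → ℤ) : ℝ := ∑ i, |(ν i : ℝ)|

open Finset

theorem HasSum.subtype_ne {β α : Type*} [AddCommGroup α] [TopologicalSpace α]
    [IsTopologicalAddGroup α] {f : β → α} {a : α} (hf : HasSum f a) (b : β) :
    HasSum (fun x : {x // x ≠ b} => f x) (a - f b) :=
  (hasSum_singleton b f).hasSum_iff_compl.1 hf

theorem HasSum.fin_prod_pow_of_nonneg {α : Type*} {f : α → ℝ} {S : ℝ} (hf : HasSum f S)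
    (hf0 : 0 ≤ f) (d : ℕ) : HasSum (fun ν : Fin d → α => ∏ i, f (ν i)) (S ^ d) := by
  induction d with
  | zero => simp
  | succ d ih =>
    have hprod0 : 0 ≤ fun ν : Fin d → α => ∏ i, f (ν i) := fun ν => prod_nonneg fun i _ => hf0 _
    have hsum := hf.summable.mul_of_nonneg ih.summable hf0 hprod0
    rw [pow_succ']
    refine (Fin.consEquiv fun _ => α).hasSum_iff.1 ((hf.mul ih hsum).congr_fun fun p => ?_)
    simp [Fin.prod_univ_succ]

theorem hasSum_pow_natAbs {K : Type*} [NormedField K] {r : K} (hr : ‖r‖ < 1) :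
    HasSum (fun n : ℤ => r ^ n.natAbs) ((1 + r) / (1 - r)) := by
  have hgeom := hasSum_geometric_of_norm_lt_one hr
  have hr1 : 1 - r ≠ 0 := sub_ne_zero.2 (by rintro rfl; simp at hr)
  convert HasSum.of_nat_of_neg_add_one (f := fun n : ℤ => r ^ n.natAbs) hgeom
    ((hgeom.mul_left r).congr_fun fun n => ?_) using 1
  · field_simp
  · rw [show (-(n + 1 : ℤ)).natAbs = n + 1 by omega, pow_succ']

theorem exp_neg_l1_mul {d : ℕ} (ν : Fin d → ℤ) (t : ℝ) :
    Real.exp (-(l1 ν) * t) = ∏ i, Real.exp (-t) ^ (ν i).natAbs := by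
  simp only [l1, neg_mul, sum_mul, ← sum_neg_distrib, Real.exp_sum, ← Real.exp_nat_mul,
    Nat.cast_natAbs, Int.cast_abs]
  congr! 2 with i
  ring

theorem one_add_exp_neg_div_one_sub_exp_neg_le {t : ℝ} (ht0 : 0 < t) (ht2 : t ≤ 2) :
    (1 + Real.exp (-t)) / (1 - Real.exp (-t)) ≤ 4 / t := by
  have hr : Real.exp (-t) * (1 + t) ≤ 1 :=
    calc Real.exp (-t) * (1 + t) ≤ Real.exp (-t) * Real.exp t := by
          gcongr; linarith [Real.add_one_le_exp t]
      _ = 1 := by rw [← Real.exp_add, neg_add_cancel, Real.exp_zero]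
  have hr1 : Real.exp (-t) < 1 := Real.exp_lt_one_iff.mpr (by linarith)
  rw [div_le_div_iff₀ (by linarith) ht0]
  nlinarith [Real.exp_pos (-t)]

theorem sum_exp_l1_lt_general (d : ℕ) (h : ℝ) (h0 : 0 < h) (h2 : h < 2) :
    Summable (fun ν : {ν : Fin d → ℤ // ν ≠ 0} => Real.exp (-(l1 ν.1) * h / 2)) ∧
    ∑' ν : {ν : Fin d → ℤ // ν ≠ 0}, Real.exp (-(l1 ν.1) * h / 2) < (8 / h) ^ d := by
  set r := Real.exp (-(h / 2))
  have hr1 : r < 1 := Real.exp_lt_one_iff.2 (by linarith)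
  have hr : ‖r‖ < 1 := by rwa [Real.norm_of_nonneg (Real.exp_pos _).le]
  have hS : 0 ≤ (1 + r) / (1 - r) := div_nonneg (by positivity) (by linarith)
  have hfull : HasSum (fun ν : Fin d → ℤ => Real.exp (-(l1 ν) * h / 2))
      (((1 + r) / (1 - r)) ^ d) := by
    simpa only [mul_div_assoc, exp_neg_l1_mul] using
      (hasSum_pow_natAbs hr).fin_prod_pow_of_nonneg (fun n => by positivity) d
  have hzero : Real.exp (-(l1 (0 : Fin d → ℤ)) * h / 2) = 1 := by simp [l1]
  have hsub := hfull.subtype_ne 0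
  rw [hzero] at hsub
  refine ⟨hsub.summable, hsub.tsum_eq ▸ ?_⟩
  calc ((1 + r) / (1 - r)) ^ d - 1 < ((1 + r) / (1 - r)) ^ d := sub_one_lt _
    _ ≤ (4 / (h / 2)) ^ d :=
      pow_le_pow_left₀ hS (one_add_exp_neg_div_one_sub_exp_neg_le (by positivity) (by linarith)) d
    _ = (8 / h) ^ d := by ring

/-- for `0 < h < 2` and `d ≥ 1`,
`Σ_{ν ∈ ℤ^d \ {0}} e^{-|ν| h/2} < (8/h)^d`. -/
theorem sum_exp_l1_lt (d : ℕ) (hd : 1 ≤ d) (h : ℝ) (h0 : 0 < h) (h2 : h < 2) :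
    Summable (fun ν : {ν : Fin d → ℤ // ν ≠ 0} => Real.exp (-(l1 ν.1) * h / 2)) ∧
    ∑' ν : {ν : Fin d → ℤ // ν ≠ 0}, Real.exp (-(l1 ν.1) * h / 2) < (8 / h) ^ d :=
  sum_exp_l1_lt_general d h h0 h2
end

section
/- Let m, g, f, Y, Z be differentiable functions of φ, a ∈ ℝ, ω₀, Ω ∈ ℝ^d, and set b = aΩ² + Ω·∂Z with Ω² = Σ_i Ω_i². Suppose the homological equations hold: ω₀·∂Z + f is a constant function, and ω₀·∂Y + g + m·b = 0 identically. Then the transformed coefficients m̃ = (1+Ω·∂Y)² m, g̃ = g + ω₀·∂Y + m b + (Ω·∂Y)(g + m b), and f̃ = f + ω₀·∂Z + (1/2) m b² + g b satisfy: g̃ = −(ω₀·∂Y)(Ω·∂Y), and f̃ equals (1/2)(g − ω₀·∂Y)·(aΩ² + Ω·∂Z) plus a constant (namely the constant value of ω₀·∂Z + f). -/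
noncomputable section

/-- The gradient `∂W/∂φ` of a real-valued function of `φ ∈ ℝ^d`. -/
def gradR {d : ℕ} (W : (Fin d → ℝ) → ℝ) (φ : Fin d → ℝ) : Fin d → ℝ :=
  fun i => fderiv ℝ W φ (Pi.single i 1)

/-- if the homological equations `ω₀·∂Z + f = const` and
`ω₀·∂Y + g + m b = 0` hold, with `b = aΩ² + Ω·∂Z`, then the transformed coefficients
satisfy `g̃ = −(ω₀·∂Y)(Ω·∂Y)` and `f̃ = (1/2)(g − ω₀·∂Y)(aΩ² + Ω·∂Z) + const`. -/
theorem transformed_coefficients (d : ℕ) (hd : 1 ≤ d)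
    (m g f Y Z : (Fin d → ℝ) → ℝ)
    (hm : Differentiable ℝ m) (hg : Differentiable ℝ g) (hf : Differentiable ℝ f)
    (hY : Differentiable ℝ Y) (hZ : Differentiable ℝ Z)
    (a : ℝ) (ω₀ Ω : Fin d → ℝ)
    (b : (Fin d → ℝ) → ℝ)
    (hb : ∀ φ, b φ = a * (∑ i, Ω i ^ 2) + (∑ i, Ω i * gradR Z φ i))
    (C : ℝ)
    (homZ : ∀ φ, (∑ i, ω₀ i * gradR Z φ i) + f φ = C)
    (homY : ∀ φ, (∑ i, ω₀ i * gradR Y φ i) + g φ + m φ * b φ = 0)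
    (mt gt ft : (Fin d → ℝ) → ℝ)
    (hmt : ∀ φ, mt φ = (1 + ∑ i, Ω i * gradR Y φ i) ^ 2 * m φ)
    (hgt : ∀ φ, gt φ = g φ + (∑ i, ω₀ i * gradR Y φ i) + m φ * b φ +
      (∑ i, Ω i * gradR Y φ i) * (g φ + m φ * b φ))
    (hft : ∀ φ, ft φ = f φ + (∑ i, ω₀ i * gradR Z φ i) + (1 / 2) * m φ * b φ ^ 2 +
      g φ * b φ) :
    (∀ φ, gt φ = -(∑ i, ω₀ i * gradR Y φ i) * (∑ i, Ω i * gradR Y φ i)) ∧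
    (∀ φ, ft φ =
      (1 / 2) * (g φ - ∑ i, ω₀ i * gradR Y φ i) *
        (a * (∑ i, Ω i ^ 2) + (∑ i, Ω i * gradR Z φ i)) + C) := by
  constructor
  · intro φ
    have h := homY φ
    rw [hgt φ]
    linear_combination (1 + ∑ i, Ω i * gradR Y φ i) * h
  · intro φ
    have h1 := homY φ
    have h2 := homZ φ
    have h3 := hb φ
    rw [hft φ, ← h3]
    linear_combination h2 + (1/2) * b φ * h1

end
end

section
/- Let Y be a continuously differentiable real-valued function on ℝ^d, 2π-periodic in each variable, let Ω ∈ ℝ^d, and suppose 1 + Ω·∂Y(φ) > 0 for all φ and that the induced map Φ̂: T^d → T^d, φ ↦ φ + Y(φ)Ω (mod 2π), is a bijection of the torus, with inverse Φ. Let m be continuous and 2π-periodic, and define m'(φ') = (1 + Ω·∂Y(Φ(φ')))² m(Φ(φ')). Then ⟨m'⟩ = (2π)^{-d} ∫_{T^d} (1 + Ω·∂Y(φ))³ m(φ) dφ, and consequently |⟨m'⟩ − ⟨m⟩| ≤ (sup_{T^d}|m|) · (3η + 3η² + η³), where η = sup_{T^d} |Ω·∂Y(φ)|. -/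
open scoped Real
open MeasureTheory

noncomputable section

/-- The fundamental domain `[0,2π]^d` of the torus `T^d`. -/
def boxT (d : ℕ) : Set (Fin d → ℝ) := Set.Icc 0 (fun _ => 2 * π)

/-- The mean value `⟨u⟩ = (2π)^{-d} ∫_{T^d} u(φ) dφ`. -/
def meanT (d : ℕ) (u : (Fin d → ℝ) → ℝ) : ℝ :=
  ((2 * π) ^ d)⁻¹ * ∫ x in boxT d, u x

/-- Equality modulo `2πℤ^d`. -/
def eqMod2pi {d : ℕ} (x y : Fin d → ℝ) : Prop := ∀ i, ∃ k : ℤ, x i = y i + 2 * π * k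

/-!
The map `F φ = φ + Y(φ) Ω` commutes with translations by the lattice `(2πℤ)^d`, and the inverse
`Φ` makes the induced map of the torus bijective. Hence `F` maps a fundamental domain `D` of the
lattice injectively onto another fundamental domain `F '' D`, over which the periodic function `m'`
has the same integral. The change of variables `φ' = F φ` on `D`, with the matrix determinant
lemma `det DF = 1 + Ω·∂Y > 0` and `Φ (F φ) ≡ φ`, turns `∫ m'` into `∫ (1 + Ω·∂Y)³ m`. The estimate
then follows from `|(1 + t)³ - 1| ≤ 3|t| + 3|t|² + |t|³`.
-/

open Function Set Submodule

section Quotient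

variable {E α : Type*} [AddCommGroup E] {L : AddSubgroup E}

theorem Function.Periodic.of_mem_span_int {s : Set E} {u : E → α} (hu : ∀ c ∈ s, Periodic u c)
    {c : E} (hc : c ∈ span ℤ s) : Periodic u c := by
  induction hc using Submodule.span_induction with
  | mem c hc => exact hu c hc
  | zero => exact fun x => by rw [add_zero]
  | add a b _ _ ha hb => exact ha.add_period hb
  | smul n c _ hc => exact hc.zsmul n

theorem apply_eq_of_mk_eq_mk {u : E → α} (hu : ∀ c ∈ L, Periodic u c) {x y : E}
    (h : (x : E ⧸ L) = y) : u x = u y := by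
  simpa using (hu _ (QuotientAddGroup.eq.mp h) x).symm

theorem mk_vadd_eq_mk (g : L) (x : E) : ((g +ᵥ x : E) : E ⧸ L) = x := by
  rw [AddSubgroup.vadd_def, vadd_eq_add, add_comm]
  exact QuotientAddGroup.mk_add_of_mem x g.2

theorem bijOn_mk_iff_existsUnique_vadd_mem {D : Set E} :
    BijOn ((↑) : E → E ⧸ L) D univ ↔ ∀ x, ∃! g : L, g +ᵥ x ∈ D := by
  constructor
  · rintro ⟨-, hinj, hsurj⟩ x
    obtain ⟨a, ha, hax⟩ := hsurj (mem_univ (x : E ⧸ L))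
    have hg : a - x ∈ L := QuotientAddGroup.eq_iff_sub_mem.mp hax
    refine ⟨⟨a - x, hg⟩, by simpa [AddSubgroup.vadd_def] using ha, fun g hgD => ?_⟩
    have : g +ᵥ x = a := hinj hgD ha (by rw [hax, mk_vadd_eq_mk])
    ext1
    simp [← this, AddSubgroup.vadd_def]
  · intro hD
    refine ⟨mapsTo_univ _ _, fun a ha b hb hab => ?_, fun q _ => ?_⟩
    · have hg : a - b ∈ L := QuotientAddGroup.eq_iff_sub_mem.mp hab
      have : (⟨a - b, hg⟩ : L) = 0 :=
        (hD b).unique (by simpa [AddSubgroup.vadd_def] using ha) (by simpa using hb)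
      simpa [sub_eq_zero] using congrArg Subtype.val this
    · obtain ⟨x, rfl⟩ := QuotientAddGroup.mk_surjective q
      obtain ⟨g, hg, -⟩ := hD x
      exact ⟨_, hg, mk_vadd_eq_mk g x⟩

theorem isAddFundamentalDomain_of_bijOn_mk [MeasurableSpace E] {μ : Measure E} {D : Set E}
    (hDm : MeasurableSet D) (hD : BijOn ((↑) : E → E ⧸ L) D univ) :
    IsAddFundamentalDomain L D μ :=
  IsAddFundamentalDomain.mk' hDm.nullMeasurableSet (bijOn_mk_iff_existsUnique_vadd_mem.mp hD)

variable {F Φ : E → E}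

theorem mk_apply_eq_mk_apply_of_mk_eq_mk (hF : ∀ c ∈ L, ∀ x, F (x + c) = F x + c) {x y : E}
    (h : (x : E ⧸ L) = y) : (F x : E ⧸ L) = F y := by
  have hc : y - x ∈ L := QuotientAddGroup.eq_iff_sub_mem.mp h.symm
  rw [← add_sub_cancel x y, hF _ hc]
  exact (QuotientAddGroup.mk_add_of_mem _ hc).symm

theorem mk_eq_mk_of_mk_apply_eq_mk_apply (hF : ∀ c ∈ L, ∀ x, F (x + c) = F x + c)
    (hΦF : ∀ x, (Φ (F x) : E ⧸ L) = x) {x y : E} (h : (F x : E ⧸ L) = F y) :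
    (x : E ⧸ L) = y := by
  have hc : F x - F y ∈ L := QuotientAddGroup.eq_iff_sub_mem.mp h
  calc (x : E ⧸ L) = Φ (F x) := (hΦF x).symm
    _ = Φ (F (y + (F x - F y))) := by rw [hF _ hc, add_sub_cancel]
    _ = (y + (F x - F y) : E) := hΦF _
    _ = y := QuotientAddGroup.mk_add_of_mem y hc

theorem Set.BijOn.image_of_equivariant {D : Set E} (hD : BijOn ((↑) : E → E ⧸ L) D univ)
    (hF : ∀ c ∈ L, ∀ x, F (x + c) = F x + c)
    (hΦF : ∀ x, (Φ (F x) : E ⧸ L) = x) (hFΦ : ∀ y, (F (Φ y) : E ⧸ L) = y) :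
    InjOn F D ∧ BijOn ((↑) : E → E ⧸ L) (F '' D) univ := by
  have hinj : InjOn (((↑) : E → E ⧸ L) ∘ F) D := fun a ha b hb hab =>
    hD.injOn ha hb (mk_eq_mk_of_mk_apply_eq_mk_apply hF hΦF hab)
  refine ⟨hinj.of_comp, mapsTo_univ _ _, hinj.image_of_comp, fun q _ => ?_⟩
  obtain ⟨y, rfl⟩ := QuotientAddGroup.mk_surjective q
  obtain ⟨a, ha, hay⟩ := hD.surjOn (mem_univ (Φ y : E ⧸ L))
  exact ⟨F a, mem_image_of_mem F ha, (mk_apply_eq_mk_apply_of_mk_eq_mk hF hay).trans (hFΦ y)⟩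

end Quotient

section ChangeOfVariables

variable {E G : Type*} [NormedAddCommGroup E] [NormedSpace ℝ E] [FiniteDimensional ℝ E]
  [MeasurableSpace E] [BorelSpace E] [NormedAddCommGroup G] [NormedSpace ℝ G]
  {μ : Measure E} [μ.IsAddHaarMeasure] {L : AddSubgroup E} [Countable L]

theorem setIntegral_eq_setIntegral_abs_det_fderiv_smul_of_periodic {D : Set E}
    (hDm : MeasurableSet D) (hD : BijOn ((↑) : E → E ⧸ L) D univ)
    {F Φ : E → E} {F' : E → E →L[ℝ] E} (hF' : ∀ x, HasFDerivAt F (F' x) x)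
    (hF : ∀ c ∈ L, ∀ x, F (x + c) = F x + c)
    (hΦF : ∀ x, (Φ (F x) : E ⧸ L) = x) (hFΦ : ∀ y, (F (Φ y) : E ⧸ L) = y)
    {f : E → G} (hf : ∀ c ∈ L, Periodic f c) :
    ∫ x in D, f x ∂μ = ∫ x in D, |(F' x).det| • f (F x) ∂μ := by
  obtain ⟨hinj, hFD⟩ := hD.image_of_equivariant hF hΦF hFΦ
  have hFDm : MeasurableSet (F '' D) := hDm.image_of_continuousOn_injOn
    (fun x _ => (hF' x).continuousAt.continuousWithinAt) hinj
  calc ∫ x in D, f x ∂μ = ∫ x in F '' D, f x ∂μ :=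
        (isAddFundamentalDomain_of_bijOn_mk hDm hD).setIntegral_eq
          (isAddFundamentalDomain_of_bijOn_mk hFDm hFD) fun g x => by
            rw [AddSubgroup.vadd_def, vadd_eq_add, add_comm, hf g g.2]
    _ = ∫ x in D, |(F' x).det| • f (F x) ∂μ :=
        integral_image_eq_integral_abs_det_fderiv_smul μ hDm
          (fun x _ => (hF' x).hasFDerivWithinAt) hinj f

end ChangeOfVariables

theorem Function.Periodic.fderiv {E F : Type*} [NormedAddCommGroup E] [NormedSpace ℝ E]
    [NormedAddCommGroup F] [NormedSpace ℝ F] {f : E → F} {c : E} (h : Periodic f c) :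
    Periodic (fderiv ℝ f) c := fun x => by
  rw [← fderiv_comp_add_right, show (fun x => f (x + c)) = f from funext h]

theorem LinearMap.det_id_add_smulRight {K E : Type*} [Field K] [AddCommGroup E] [Module K E]
    [FiniteDimensional K E] (f : E →ₗ[K] K) (v : E) :
    LinearMap.det (LinearMap.id + f.smulRight v) = 1 + f v := by
  let b := Module.finBasis K E
  rw [← LinearMap.det_toMatrix b, map_add, LinearMap.toMatrix_id, LinearMap.toMatrix_smulRight,
    Matrix.vecMulVec_eq Unit, Matrix.det_one_add_replicateCol_mul_replicateRow]
  congr 1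
  conv_rhs => rw [← b.sum_repr v]
  simp only [dotProduct, map_sum, map_smul, smul_eq_mul, mul_comm]
  rfl

theorem abs_one_add_pow_three_sub_one_le {t η : ℝ} (h : |t| ≤ η) :
    |(1 + t) ^ 3 - 1| ≤ 3 * η + 3 * η ^ 2 + η ^ 3 := by
  calc |(1 + t) ^ 3 - 1| = |3 * t + 3 * t ^ 2 + t ^ 3| := by ring_nf
    _ ≤ 3 * |t| + 3 * |t| ^ 2 + |t| ^ 3 := by
      have := abs_add_three (3 * t) (3 * t ^ 2) (t ^ 3)
      rwa [abs_mul, abs_mul, abs_pow, abs_pow, abs_of_pos (three_pos : (0 : ℝ) < 3)] at this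
    _ ≤ 3 * η + 3 * η ^ 2 + η ^ 3 := by gcongr

theorem abs_le_sSup_image_abs {X : Type*} [TopologicalSpace X] {K : Set X} (hK : IsCompact K)
    {u : X → ℝ} (hu : ContinuousOn u K) {x : X} (hx : x ∈ K) :
    |u x| ≤ sSup ((fun y => |u y|) '' K) :=
  le_csSup (hK.bddAbove_image hu.abs) (mem_image_of_mem _ hx)

theorem sum_mul_gradR {d : ℕ} (W : (Fin d → ℝ) → ℝ) (φ Ω : Fin d → ℝ) :
    ∑ i, Ω i * gradR W φ i = fderiv ℝ W φ Ω := by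
  conv_rhs => rw [← Finset.univ_sum_single Ω]
  simp only [gradR, map_sum]
  refine Finset.sum_congr rfl fun i _ => ?_
  rw [← smul_eq_mul, ← map_smul, ← Pi.single_smul, smul_eq_mul, mul_one]

section Torus

variable {d : ℕ}

-- `(2πℤ)^d` is set up as the `ℤ`-span of a basis so that `ZSpan.fundamentalDomain` applies.
def torusBasis (d : ℕ) : Module.Basis (Fin d) ℝ (Fin d → ℝ) :=
  (Pi.basisFun ℝ (Fin d)).isUnitSMul fun _ => Real.two_pi_pos.ne'.isUnit

def torusLattice (d : ℕ) : AddSubgroup (Fin d → ℝ) :=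
  (span ℤ (range (torusBasis d))).toAddSubgroup

instance : Countable (torusLattice d) :=
  inferInstanceAs (Countable (span ℤ (range (torusBasis d))))

theorem torusBasis_apply (i : Fin d) : torusBasis d i = Pi.single i (2 * π) := by
  rw [torusBasis, Module.Basis.isUnitSMul_apply, Pi.basisFun_apply, ← Pi.single_smul, smul_eq_mul,
    mul_one]

theorem torusBasis_repr_apply (x : Fin d → ℝ) (i : Fin d) :
    (torusBasis d).repr x i = x i / (2 * π) := by
  simp [torusBasis, Module.Basis.repr_isUnitSMul, Units.smul_def, div_eq_inv_mul]

theorem eqMod2pi_iff_mk_eq_mk {x y : Fin d → ℝ} :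
    eqMod2pi x y ↔ (x : (Fin d → ℝ) ⧸ torusLattice d) = y := by
  rw [QuotientAddGroup.eq_iff_sub_mem, torusLattice, Submodule.mem_toAddSubgroup,
    Module.Basis.mem_span_iff_repr_mem]
  refine forall_congr' fun i => ?_
  simp only [torusBasis_repr_apply, Pi.sub_apply, mem_range, eq_div_iff Real.two_pi_pos.ne',
    algebraMap_int_eq, eq_intCast]
  exact exists_congr fun k => by constructor <;> intro h <;> linarith

theorem periodic_torusLattice_of_coord {α : Type*} {u : (Fin d → ℝ) → α}
    (hu : ∀ (φ : Fin d → ℝ) (i : Fin d), u (fun j => φ j + if j = i then 2 * π else 0) = u φ) :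
    ∀ c ∈ torusLattice d, Periodic u c := by
  refine fun c hc => Periodic.of_mem_span_int ?_ hc
  rintro _ ⟨i, rfl⟩ φ
  convert hu φ i using 2
  ext j
  simp [torusBasis_apply, Pi.single_apply]

theorem bijOn_mk_fundamentalDomain :
    BijOn ((↑) : (Fin d → ℝ) → (Fin d → ℝ) ⧸ torusLattice d)
      (ZSpan.fundamentalDomain (torusBasis d)) univ :=
  bijOn_mk_iff_existsUnique_vadd_mem.mpr (ZSpan.exist_unique_vadd_mem_fundamentalDomain _)

theorem fundamentalDomain_ae_eq_boxT :
    ZSpan.fundamentalDomain (torusBasis d) =ᵐ[volume] boxT d := by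
  classical
  have : parallelepiped (torusBasis d) = boxT d := by
    rw [show ⇑(torusBasis d) = fun i => Pi.single i (2 * π) from funext torusBasis_apply,
      parallelepiped_single, uIcc_of_le fun _ => Real.two_pi_pos.le, boxT]
  exact this ▸ ZSpan.fundamentalDomain_ae_parallelepiped _ volume

theorem setIntegral_boxT_eq_setIntegral_fundamentalDomain (u : (Fin d → ℝ) → ℝ) :
    ∫ x in boxT d, u x = ∫ x in ZSpan.fundamentalDomain (torusBasis d), u x :=
  setIntegral_congr_set fundamentalDomain_ae_eq_boxT.symm

theorem meanT_eq_meanT_abs_det_fderiv_mul_of_periodic {F Φ : (Fin d → ℝ) → Fin d → ℝ}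
    {F' : (Fin d → ℝ) → (Fin d → ℝ) →L[ℝ] Fin d → ℝ} (hF' : ∀ x, HasFDerivAt F (F' x) x)
    (hF : ∀ c ∈ torusLattice d, ∀ x, F (x + c) = F x + c)
    (hΦF : ∀ x, eqMod2pi (Φ (F x)) x) (hFΦ : ∀ y, eqMod2pi (F (Φ y)) y)
    {f : (Fin d → ℝ) → ℝ} (hf : ∀ c ∈ torusLattice d, Periodic f c) :
    meanT d f = meanT d fun x => |(F' x).det| * f (F x) := by
  rw [meanT, meanT, setIntegral_boxT_eq_setIntegral_fundamentalDomain,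
    setIntegral_boxT_eq_setIntegral_fundamentalDomain,
    setIntegral_eq_setIntegral_abs_det_fderiv_smul_of_periodic
      (ZSpan.fundamentalDomain_measurableSet _) bijOn_mk_fundamentalDomain hF' hF
      (fun x => eqMod2pi_iff_mk_eq_mk.mp (hΦF x)) (fun y => eqMod2pi_iff_mk_eq_mk.mp (hFΦ y)) hf]
  rfl

theorem meanT_sub {u v : (Fin d → ℝ) → ℝ} (hu : IntegrableOn u (boxT d))
    (hv : IntegrableOn v (boxT d)) : meanT d (fun x => u x - v x) = meanT d u - meanT d v := by
  rw [meanT, meanT, meanT, integral_sub hu hv, mul_sub]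

theorem abs_meanT_le {u : (Fin d → ℝ) → ℝ} {C : ℝ} (hu : ∀ x ∈ boxT d, |u x| ≤ C) :
    |meanT d u| ≤ C := by
  have hvol : volume.real (boxT d) = (2 * π) ^ d := by
    simp [boxT, Real.volume_Icc_pi, measureReal_def, Real.pi_pos.le]
  have hint := norm_setIntegral_le_of_norm_le_const (μ := volume) (s := boxT d)
    isCompact_Icc.measure_lt_top
    fun x hx => (Real.norm_eq_abs (u x)).trans_le (hu x hx)
  rw [hvol, Real.norm_eq_abs] at hint
  rw [meanT, abs_mul, abs_inv, abs_of_pos (by positivity), inv_mul_le_iff₀ (by positivity),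
    mul_comm]
  exact hint

theorem meanT_sq_mul_comp_eq_meanT_cube_mul {Y : (Fin d → ℝ) → ℝ} (hY : Differentiable ℝ Y)
    (hYL : ∀ c ∈ torusLattice d, Periodic Y c) {Ω : Fin d → ℝ}
    (hpos : ∀ φ, 0 < 1 + fderiv ℝ Y φ Ω) {Φ : (Fin d → ℝ) → Fin d → ℝ}
    (hΦL : ∀ c ∈ torusLattice d, Periodic (fun φ' => (Φ φ' : _ ⧸ torusLattice d)) c)
    (hleft : ∀ φ : Fin d → ℝ, eqMod2pi (Φ (fun i => φ i + Y φ * Ω i)) φ)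
    (hright : ∀ φ' : Fin d → ℝ, eqMod2pi (fun i => Φ φ' i + Y (Φ φ') * Ω i) φ')
    {m : (Fin d → ℝ) → ℝ} (hmL : ∀ c ∈ torusLattice d, Periodic m c) :
    meanT d (fun φ' => (1 + fderiv ℝ Y (Φ φ') Ω) ^ 2 * m (Φ φ')) =
      meanT d fun φ => (1 + fderiv ℝ Y φ Ω) ^ 3 * m φ := by
  set w : (Fin d → ℝ) → ℝ := fun φ => (1 + fderiv ℝ Y φ Ω) ^ 2 * m φ with hw_def
  have hwL : ∀ c ∈ torusLattice d, Periodic w c := fun c hc φ => by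
    simp only [hw_def, (hYL c hc).fderiv φ, hmL c hc φ]
  have hm'L : ∀ c ∈ torusLattice d, Periodic (fun φ' => w (Φ φ')) c :=
    fun c hc φ' => apply_eq_of_mk_eq_mk hwL (hΦL c hc φ')
  set F : (Fin d → ℝ) → Fin d → ℝ := fun φ i => φ i + Y φ * Ω i with hF_def
  have hFL : ∀ c ∈ torusLattice d, ∀ x, F (x + c) = F x + c := fun c hc x => by
    ext i
    simp only [hF_def, hYL c hc x, Pi.add_apply]
    ring
  have hF' : ∀ x, HasFDerivAt F (ContinuousLinearMap.id ℝ _ + (fderiv ℝ Y x).smulRight Ω) x :=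
    fun x => (hasFDerivAt_id x).add ((hY x).hasFDerivAt.smul_const Ω)
  rw [meanT_eq_meanT_abs_det_fderiv_mul_of_periodic hF' hFL hleft hright hm'L]
  congr 1
  funext x
  have hdet : (ContinuousLinearMap.id ℝ _ + (fderiv ℝ Y x).smulRight Ω).det = 1 + fderiv ℝ Y x Ω :=
    LinearMap.det_id_add_smulRight _ _
  calc _ = (1 + fderiv ℝ Y x Ω) * w (Φ (F x)) := by rw [hdet, abs_of_pos (hpos x)]
    _ = (1 + fderiv ℝ Y x Ω) * w x := by
      rw [apply_eq_of_mk_eq_mk hwL (eqMod2pi_iff_mk_eq_mk.mp (hleft x))]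
    _ = (1 + fderiv ℝ Y x Ω) ^ 3 * m x := by ring

theorem abs_meanT_one_add_pow_three_mul_sub_le {J m : (Fin d → ℝ) → ℝ} (hJ : Continuous J)
    (hm : Continuous m) {M η : ℝ} (hM : ∀ x ∈ boxT d, |m x| ≤ M)
    (hη : ∀ x ∈ boxT d, |J x| ≤ η) :
    |meanT d (fun x => (1 + J x) ^ 3 * m x) - meanT d m| ≤ M * (3 * η + 3 * η ^ 2 + η ^ 3) := by
  rw [← meanT_sub (by fun_prop : Continuous _).integrableOn_Icc hm.integrableOn_Icc]
  refine abs_meanT_le fun x hx => ?_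
  have hcubic := abs_one_add_pow_three_sub_one_le (hη x hx)
  calc |(1 + J x) ^ 3 * m x - m x| = |(1 + J x) ^ 3 - 1| * |m x| := by
        rw [← abs_mul, sub_one_mul]
    _ ≤ (3 * η + 3 * η ^ 2 + η ^ 3) * M :=
      mul_le_mul hcubic (hM x hx) (abs_nonneg _) ((abs_nonneg _).trans hcubic)
    _ = M * (3 * η + 3 * η ^ 2 + η ^ 3) := mul_comm _ _

end Torus

theorem mean_of_transformed_quadratic_coefficient_general (d : ℕ)
    (Y : (Fin d → ℝ) → ℝ) (hY : ContDiff ℝ 1 Y)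
    (hYper : ∀ (φ : Fin d → ℝ) (i : Fin d),
      Y (fun j => φ j + if j = i then 2 * π else 0) = Y φ)
    (Ω : Fin d → ℝ)
    (hpos : ∀ φ, 0 < 1 + ∑ i, Ω i * gradR Y φ i)
    (Φ : (Fin d → ℝ) → (Fin d → ℝ))
    (hΦdesc : ∀ (φ' : Fin d → ℝ) (i : Fin d),
      eqMod2pi (Φ (fun j => φ' j + if j = i then 2 * π else 0)) (Φ φ'))
    (hleft : ∀ φ : Fin d → ℝ, eqMod2pi (Φ (fun i => φ i + Y φ * Ω i)) φ)
    (hright : ∀ φ' : Fin d → ℝ, eqMod2pi (fun i => Φ φ' i + Y (Φ φ') * Ω i) φ')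
    (m : (Fin d → ℝ) → ℝ) (hm : Continuous m)
    (hmper : ∀ (φ : Fin d → ℝ) (i : Fin d),
      m (fun j => φ j + if j = i then 2 * π else 0) = m φ)
    (m' : (Fin d → ℝ) → ℝ)
    (hm' : ∀ φ', m' φ' = (1 + ∑ i, Ω i * gradR Y (Φ φ') i) ^ 2 * m (Φ φ'))
    (M η : ℝ)
    (hM : M = sSup ((fun φ => |m φ|) '' boxT d))
    (hη : η = sSup ((fun φ => |∑ i, Ω i * gradR Y φ i|) '' boxT d)) :
    meanT d m' = ((2 * π) ^ d)⁻¹ *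
      ∫ x in boxT d, (1 + ∑ i, Ω i * gradR Y x i) ^ 3 * m x ∧
    |meanT d m' - meanT d m| ≤ M * (3 * η + 3 * η ^ 2 + η ^ 3) := by
  simp only [sum_mul_gradR] at hpos hm' hη ⊢
  have hmean : meanT d m' = meanT d fun x => (1 + fderiv ℝ Y x Ω) ^ 3 * m x := by
    rw [show m' = _ from funext hm']
    exact meanT_sq_mul_comp_eq_meanT_cube_mul (hY.differentiable one_ne_zero)
      (periodic_torusLattice_of_coord hYper) hpos
      (periodic_torusLattice_of_coord fun φ' i => eqMod2pi_iff_mk_eq_mk.mp (hΦdesc φ' i))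
      hleft hright (periodic_torusLattice_of_coord hmper)
  have hJ : Continuous fun x => fderiv ℝ Y x Ω :=
    (hY.continuous_fderiv one_ne_zero).clm_apply continuous_const
  refine ⟨hmean, hmean ▸ abs_meanT_one_add_pow_three_mul_sub_le hJ hm ?_ ?_⟩
  · exact fun x hx => hM ▸ abs_le_sSup_image_abs isCompact_Icc hm.continuousOn hx
  · exact fun x hx => hη ▸ abs_le_sSup_image_abs isCompact_Icc hJ.continuousOn hx

/-- if `φ ↦ φ + Y(φ)Ω` induces a bijection of the torus with inverse `Φ`,
then the mean of `m'(φ') = (1+Ω·∂Y(Φ(φ')))² m(Φ(φ'))` equals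
`(2π)^{-d} ∫ (1+Ω·∂Y)³ m`, and `|⟨m'⟩−⟨m⟩| ≤ (sup|m|)(3η+3η²+η³)` with `η = sup|Ω·∂Y|`. -/
theorem mean_of_transformed_quadratic_coefficient (d : ℕ) (hd : 1 ≤ d)
    (Y : (Fin d → ℝ) → ℝ) (hY : ContDiff ℝ 1 Y)
    (hYper : ∀ (φ : Fin d → ℝ) (i : Fin d),
      Y (fun j => φ j + if j = i then 2 * π else 0) = Y φ)
    (Ω : Fin d → ℝ)
    (hpos : ∀ φ, 0 < 1 + ∑ i, Ω i * gradR Y φ i)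
    (Φ : (Fin d → ℝ) → (Fin d → ℝ)) (hΦcont : Continuous Φ)
    (hΦdesc : ∀ (φ' : Fin d → ℝ) (i : Fin d),
      eqMod2pi (Φ (fun j => φ' j + if j = i then 2 * π else 0)) (Φ φ'))
    (hleft : ∀ φ : Fin d → ℝ, eqMod2pi (Φ (fun i => φ i + Y φ * Ω i)) φ)
    (hright : ∀ φ' : Fin d → ℝ, eqMod2pi (fun i => Φ φ' i + Y (Φ φ') * Ω i) φ')
    (m : (Fin d → ℝ) → ℝ) (hm : Continuous m)
    (hmper : ∀ (φ : Fin d → ℝ) (i : Fin d),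
      m (fun j => φ j + if j = i then 2 * π else 0) = m φ)
    (m' : (Fin d → ℝ) → ℝ)
    (hm' : ∀ φ', m' φ' = (1 + ∑ i, Ω i * gradR Y (Φ φ') i) ^ 2 * m (Φ φ'))
    (M η : ℝ)
    (hM : M = sSup ((fun φ => |m φ|) '' boxT d))
    (hη : η = sSup ((fun φ => |∑ i, Ω i * gradR Y φ i|) '' boxT d)) :
    meanT d m' = ((2 * π) ^ d)⁻¹ *
      ∫ x in boxT d, (1 + ∑ i, Ω i * gradR Y x i) ^ 3 * m x ∧
    |meanT d m' - meanT d m| ≤ M * (3 * η + 3 * η ^ 2 + η ^ 3) :=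
  mean_of_transformed_quadratic_coefficient_general d Y hY hYper Ω hpos Φ hΦdesc hleft hright m hm
    hmper m' hm' M η hM hη

end
end
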